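/- The duality defect of the Ising model cannot be moved freely along a free boundary: for every real u there exist spins a, c, d ∈ {0, 1} such that ∑_{b∈{0,1}} W^H(u)_{ab} · (−1)^{b·d} · (−1)^{b·c} ≠ ∑_{b∈{0,1}} W^V(u)_{bd} · (−1)^{a·d} · (−1)^{a·b}, where W^H(u)_{ab} = cos(π/4 − u) if a = b and sin(π/4 − u) if a ≠ b, and W^V(u)_{ab} = cos u if a = b and sin u if a ≠ b. Hence the two configurations obtained by sliding the duality defect one step along the boundary never assign equal weights for all boundary spin values, for any value of the coupling parameter u. -/
import Mathlib


open Real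

/-- Horizontal plaquette weight of the Ising model. -/
noncomputable def WH (u : ℝ) (a b : Fin 2) : ℝ :=
  if a = b then Real.cos (Real.pi / 4 - u) else Real.sin (Real.pi / 4 - u)

/-- Vertical plaquette weight of the Ising model. -/
noncomputable def WV (u : ℝ) (a b : Fin 2) : ℝ :=
  if a = b then Real.cos u else Real.sin u

/-- Appendix A: the duality defect cannot be moved freely along a free boundary:
for every coupling `u` there are boundary spins `a, c, d` for which the weights of
the two configurations obtained by sliding the defect one step differ. -/
theorem duality_defect_boundary_obstruction (u : ℝ) :
    ∃ a c d : Fin 2,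
      (∑ b : Fin 2, WH u a b * (-1 : ℝ) ^ ((b : ℕ) * (d : ℕ)) *
          (-1 : ℝ) ^ ((b : ℕ) * (c : ℕ))) ≠
      (∑ b : Fin 2, WV u b d * (-1 : ℝ) ^ ((a : ℕ) * (d : ℕ)) *
          (-1 : ℝ) ^ ((a : ℕ) * (b : ℕ))) := by
  have key : Real.cos u + Real.sin u = Real.sqrt 2 * Real.cos (Real.pi / 4 - u) := by
    rw [Real.cos_sub, Real.cos_pi_div_four, Real.sin_pi_div_four]
    have h2 : Real.sqrt 2 * Real.sqrt 2 = 2 := Real.mul_self_sqrt (by norm_num)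
    linear_combination (-(Real.cos u + Real.sin u)/2) * h2
  by_cases h : Real.cos (Real.pi / 4 - u) + Real.sin (Real.pi / 4 - u)
      = Real.cos u + Real.sin u
  · refine ⟨0, 1, 0, ?_⟩
    simp only [Fin.sum_univ_two, WH, WV]
    norm_num
    intro habs
    have hsq := Real.sin_sq_add_cos_sq (Real.pi / 4 - u)
    have h2 : Real.sqrt 2 ^ 2 = 2 := Real.sq_sqrt (by norm_num)
    rw [key] at h habs
    set c := Real.cos (Real.pi / 4 - u)
    set s := Real.sin (Real.pi / 4 - u)
    have hc : c = Real.sqrt 2 * c := by linarith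
    have hc0 : c = 0 := by nlinarith [hc, h2]
    have hs0 : s = 0 := by linarith
    rw [hc0, hs0] at hsq
    norm_num at hsq
  · refine ⟨0, 0, 0, ?_⟩
    simp only [Fin.sum_univ_two, WH, WV]
    norm_num
    exact h
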